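/- arXiv:2405.07180 — 6 statements merged into one kernel-verified Lean document; each statement's English description precedes it below -/
import Mathlib

section
/- Let q be a prime power, ℓ ≥ 1, and let S and T' be F_q-subspaces of F_{q^ℓ} with dim S = s and dim T' = ℓ - s, where 1 ≤ s ≤ ℓ. Then there exists a nonzero δ ∈ F_{q^ℓ} such that S ⊕ δT' = F_{q^ℓ}, i.e., S ∩ δT' = {0}. -/
/-!
If `S ∩ δT' ≠ 0` then `δ = a / b` for some nonzero `a ∈ S`, `b ∈ T'`. There are at most
`(|S| - 1)(|T'| - 1)` such quotients, which is less than `|S||T'| - 1 = |F| - 1`, the number of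
nonzero `δ`. So some nonzero `δ` has `S ∩ δT' = 0`, and a dimension count upgrades this to
`S ⊕ δT' = F`.
-/

open Module Finset Pointwise

lemma exists_ne_zero_notMem_div {α : Type*} [Fintype α] [DecidableEq α] [Zero α] [Div α]
    (A B : Finset α) (h : #A * #B < Fintype.card α - 1) : ∃ δ ≠ (0 : α), δ ∉ A / B := by
  by_contra! hAB
  have hsub : univ.erase 0 ⊆ A / B := fun δ hδ ↦ hAB δ (ne_of_mem_erase hδ)
  have := (card_le_card hsub).trans card_div_le
  rw [card_erase_of_mem (mem_univ _), card_univ] at this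
  omega

lemma Nat.sub_one_mul_sub_one_lt {a b : ℕ} (hab : 2 ≤ a * b) : (a - 1) * (b - 1) < a * b - 1 := by
  rcases a with _ | a
  · simp at hab
  rcases b with _ | b
  · simp at hab
  rw [Nat.add_sub_cancel, Nat.add_sub_cancel, Nat.lt_sub_iff_add_lt]
  nlinarith

section

variable {K F : Type*} [Field K] [Field F] [Algebra K F]

lemma exists_div_eq_of_not_disjoint_map_mulLeft {S T : Submodule K F} {δ : F}
    (h : ¬Disjoint S (T.map (LinearMap.mulLeft K δ))) :
    ∃ a ∈ S, a ≠ 0 ∧ ∃ b ∈ T, b ≠ 0 ∧ a / b = δ := by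
  simp only [Submodule.disjoint_def, not_forall] at h
  obtain ⟨x, hxS, hxT, hx⟩ := h
  obtain ⟨b, hbT, rfl⟩ := Submodule.mem_map.mp hxT
  have hb : b ≠ 0 := by rintro rfl; simp at hx
  exact ⟨_, hxS, hx, b, hbT, hb, by simp [hb]⟩

lemma finrank_map_mulLeft {δ : F} (hδ : δ ≠ 0) (T : Submodule K F) :
    finrank K (T.map (LinearMap.mulLeft K δ)) = finrank K T :=
  (Submodule.equivMapOfInjective _ (mul_right_injective₀ hδ) T).finrank_eq.symm

lemma card_erase_zero_filter_mem [Fintype F] [DecidableEq F] (S : Submodule K F)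
    [DecidablePred (· ∈ S)] : #((univ.filter (· ∈ S)).erase 0) = Nat.card S - 1 := by
  rw [card_erase_of_mem (by simp), ← Fintype.card_subtype, Nat.card_eq_fintype_card]

theorem exists_ne_zero_disjoint_map_mulLeft [Fintype F] {S T : Submodule K F}
    (hcard : Nat.card S * Nat.card T = Fintype.card F) :
    ∃ δ : F, δ ≠ 0 ∧ Disjoint S (T.map (LinearMap.mulLeft K δ)) := by
  classical
  have hlt : #((univ.filter (· ∈ S)).erase 0) * #((univ.filter (· ∈ T)).erase 0) <
      Fintype.card F - 1 := by
    rw [card_erase_zero_filter_mem, card_erase_zero_filter_mem, ← hcard]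
    exact Nat.sub_one_mul_sub_one_lt (hcard ▸ Fintype.one_lt_card)
  obtain ⟨δ, hδ, hδAB⟩ := exists_ne_zero_notMem_div _ _ hlt
  refine ⟨δ, hδ, ?_⟩
  by_contra h
  obtain ⟨a, haS, ha, b, hbT, hb, rfl⟩ := exists_div_eq_of_not_disjoint_map_mulLeft h
  exact hδAB (div_mem_div (by simp [haS, ha]) (by simp [hbT, hb]))

theorem exists_ne_zero_isCompl_map_mulLeft [Finite F] {S T : Submodule K F}
    (hST : finrank K S + finrank K T = finrank K F) :
    ∃ δ : F, δ ≠ 0 ∧ IsCompl S (T.map (LinearMap.mulLeft K δ)) := by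
  have : Fintype F := Fintype.ofFinite F
  have : Finite K := Finite.of_injective _ (algebraMap K F).injective
  have : FiniteDimensional K F := Module.Finite.of_finite
  have hcard : Nat.card S * Nat.card T = Fintype.card F := by
    rw [← Nat.card_eq_fintype_card, natCard_eq_pow_finrank (K := K) (V := S),
      natCard_eq_pow_finrank (K := K) (V := T), natCard_eq_pow_finrank (K := K) (V := F),
      ← pow_add, hST]
  obtain ⟨δ, hδ, hdisj⟩ := exists_ne_zero_disjoint_map_mulLeft hcard
  refine ⟨δ, hδ, (Submodule.isCompl_iff_disjoint _ _ ?_).mpr hdisj⟩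
  rw [finrank_map_mulLeft hδ, hST]

end

theorem stmt0_general {K F : Type*} [Field K] [Field F] [Algebra K F] [Fintype F]
    (ℓ s : ℕ) (hℓ : finrank K F = ℓ)
    (hsℓ : s ≤ ℓ)
    (S T' : Submodule K F) (hS : finrank K S = s) (hT' : finrank K T' = ℓ - s) :
    ∃ δ : F, δ ≠ 0 ∧ IsCompl S (T'.map (LinearMap.mulLeft K δ)) :=
  exists_ne_zero_isCompl_map_mulLeft (by omega)

/-- For `F_q`-subspaces `S`, `T'` of `F_{q^ℓ}` with `dim S = s`,
`dim T' = ℓ - s`, `1 ≤ s ≤ ℓ`, there exists a nonzero `δ` with `S ⊕ δT' = F_{q^ℓ}`. -/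
theorem stmt0 {K F : Type*} [Field K] [Field F] [Algebra K F] [Fintype K] [Fintype F]
    (q ℓ s : ℕ) (hq : Fintype.card K = q) (hℓ : finrank K F = ℓ)
    (hs1 : 1 ≤ s) (hsℓ : s ≤ ℓ)
    (S T' : Submodule K F) (hS : finrank K S = s) (hT' : finrank K T' = ℓ - s) :
    ∃ δ : F, δ ≠ 0 ∧ IsCompl S (T'.map (LinearMap.mulLeft K δ)) :=
  stmt0_general ℓ s hℓ hsℓ S T' hS hT'
end

section
/- Let q be a prime power, a ∣ ℓ, m < ℓ with m ∣ ℓ and gcd(a, m) = 1, and set W = F_{q^m}, T = F_{q^a} (as F_q-subspaces of F_{q^ℓ}). Then the sum over all γ ∈ F_{q^ℓ}* of dim_{F_q}(γT ∩ W) equals (q^a − 1)(q^m − 1)/(q − 1). -/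
/-!
Since `[T ⊓ W : K]` divides both `a` and `m`, the fields `T` and `W` meet only in `K`. Hence for
`γ ≠ 0` any two elements of `γT ∩ W` have a quotient in `T ∩ W = K`, so `dim (γT ∩ W) ≤ 1` and
`γT ∩ W` has exactly `(q - 1) · dim (γT ∩ W)` nonzero elements. Summing over `γ` counts the pairs
`(γ, x)` with `x ∈ W*` and `γ⁻¹x ∈ T*`, of which there are `(q^a - 1)(q^m - 1)`.
-/

open Module Finset

theorem Submodule.card_filter_mem_ne_zero {K V : Type*} [Field K] [Fintype K] [AddCommGroup V]
    [Module K V] [Fintype V] [DecidableEq V] (S : Submodule K V) [DecidablePred (· ∈ S)] :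
    #{x | x ∈ S ∧ x ≠ 0} = Fintype.card K ^ finrank K S - 1 := by
  rw [← filter_filter, filter_ne', card_erase_of_mem (by simp), ← card_eq_pow_finrank,
    Fintype.card_subtype]

theorem sum_card_filter_inv_mul_mem {G : Type*} [GroupWithZero G] [Fintype G] [DecidableEq G]
    {A B : Finset G} (hA : 0 ∉ A) (hB : 0 ∉ B) :
    ∑ γ ∈ univ.filter (fun γ : G => γ ≠ 0), #{x ∈ B | γ⁻¹ * x ∈ A} = #A * #B := by
  calc ∑ γ ∈ univ.filter (fun γ : G => γ ≠ 0), #{x ∈ B | γ⁻¹ * x ∈ A}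
      = ∑ x ∈ B, #{γ ∈ univ.filter (fun γ : G => γ ≠ 0) | γ⁻¹ * x ∈ A} :=
        sum_card_bipartiteAbove_eq_sum_card_bipartiteBelow (fun γ x => γ⁻¹ * x ∈ A)
    _ = ∑ _x ∈ B, #A := sum_congr rfl fun x hx => by
        have hx0 : x ≠ 0 := ne_of_mem_of_not_mem hx hB
        refine card_nbij' (fun γ => γ⁻¹ * x) (fun a => x * a⁻¹) ?_ ?_ ?_ ?_
        · intro γ hγ
          simp_all
        · intro a ha
          have ha0 : a ≠ 0 := ne_of_mem_of_not_mem ha hA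
          simp_all
        · intro γ hγ
          simp_all
        · intro a ha
          have ha0 : a ≠ 0 := ne_of_mem_of_not_mem ha hA
          simp_all
    _ = #A * #B := by rw [sum_const, smul_eq_mul, mul_comm]

theorem IntermediateField.finrank_map_mulLeft_inf_le_one {K F : Type*} [Field K] [Field F]
    [Algebra K F] {T W : IntermediateField K F} (h : T ⊓ W = ⊥) (γ : F) :
    finrank K ↥((Subalgebra.toSubmodule T.toSubalgebra).map (LinearMap.mulLeft K γ) ⊓
      Subalgebra.toSubmodule W.toSubalgebra) ≤ 1 := by
  set S := (Subalgebra.toSubmodule T.toSubalgebra).map (LinearMap.mulLeft K γ) ⊓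
    Subalgebra.toSubmodule W.toSubalgebra
  have mem_S : ∀ x, x ∈ S ↔ (∃ t ∈ T, γ * t = x) ∧ x ∈ W := fun x => by
    simp [S, Submodule.mem_inf, Submodule.mem_map]
  rcases eq_or_ne S ⊥ with hS | hS
  · rw [hS, finrank_bot]
    exact zero_le_one
  obtain ⟨x, hxS, hx0⟩ := Submodule.exists_mem_ne_zero_of_ne_bot hS
  obtain ⟨⟨t, htT, rfl⟩, hxW⟩ := (mem_S _).1 hxS
  refine finrank_le_one ⟨γ * t, hxS⟩ fun ⟨y, hyS⟩ => ?_
  obtain ⟨⟨s, hsT, rfl⟩, hyW⟩ := (mem_S _).1 hyS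
  have hquot : γ * s / (γ * t) ∈ T ⊓ W := by
    refine ⟨?_, div_mem hyW hxW⟩
    rw [mul_div_mul_left _ _ (left_ne_zero_of_mul hx0)]
    exact div_mem hsT htT
  rw [h, IntermediateField.mem_bot] at hquot
  obtain ⟨c, hc⟩ := hquot
  exact ⟨c, Subtype.ext (by simp [Algebra.smul_def, hc, div_mul_cancel₀ _ hx0])⟩

theorem IntermediateField.inf_eq_bot_of_coprime_finrank {K F : Type*} [Field K] [Field F]
    [Algebra K F] {T W : IntermediateField K F} (h : (finrank K T).Coprime (finrank K W)) :
    T ⊓ W = ⊥ := by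
  rw [← finrank_eq_one_iff, ← Nat.dvd_one, ← h]
  exact Nat.dvd_gcd (finrank_dvd_of_le_right inf_le_left) (finrank_dvd_of_le_right inf_le_right)

theorem stmt4_general {K F : Type*} [Field K] [Field F] [Algebra K F] [Fintype K] [Fintype F]
    [DecidableEq F]
    (q a m : ℕ) (hq : Fintype.card K = q)
    (ham : Nat.gcd a m = 1)
    (T W : IntermediateField K F) (hT : finrank K T = a) (hW : finrank K W = m) :
    ∑ γ ∈ Finset.univ.filter (fun γ : F => γ ≠ 0),
      finrank K
        ↥((Subalgebra.toSubmodule T.toSubalgebra).map (LinearMap.mulLeft K γ) ⊓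
          Subalgebra.toSubmodule W.toSubalgebra)
      = (q ^ a - 1) * (q ^ m - 1) / (q - 1) := by
  classical
  set S : F → Submodule K F := fun γ =>
    (Subalgebra.toSubmodule T.toSubalgebra).map (LinearMap.mulLeft K γ) ⊓
      Subalgebra.toSubmodule W.toSubalgebra
  set A : Finset F := {x | x ∈ T ∧ x ≠ 0}
  set B : Finset F := {x | x ∈ W ∧ x ≠ 0}
  have hTW : T ⊓ W = ⊥ := IntermediateField.inf_eq_bot_of_coprime_finrank (hT ▸ hW ▸ ham)
  have card_S : ∀ γ ≠ 0, finrank K (S γ) * (q - 1) = #{x ∈ B | γ⁻¹ * x ∈ A} := by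
    intro γ hγ
    have hSB : {x ∈ B | γ⁻¹ * x ∈ A} = ({x | x ∈ S γ ∧ x ≠ 0} : Finset F) := by
      ext x
      simp [S, A, B, Submodule.mem_inf, Submodule.mem_map, ← eq_inv_mul_iff_mul_eq₀ hγ]
      tauto
    rw [hSB, Submodule.card_filter_mem_ne_zero, hq]
    rcases Nat.le_one_iff_eq_zero_or_eq_one.1
      (IntermediateField.finrank_map_mulLeft_inf_le_one hTW γ) with h | h <;> simp [S, h]
  have card_A : #A = q ^ a - 1 := by
    simpa [hq, hT] using (Subalgebra.toSubmodule T.toSubalgebra).card_filter_mem_ne_zero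
  have card_B : #B = q ^ m - 1 := by
    simpa [hq, hW] using (Subalgebra.toSubmodule W.toSubalgebra).card_filter_mem_ne_zero
  have hq1 : q - 1 ≠ 0 := by have := hq ▸ Fintype.one_lt_card (α := K); omega
  refine Nat.eq_div_of_mul_eq_left hq1 ?_
  rw [sum_mul, sum_congr rfl fun γ hγ => card_S γ (mem_filter.1 hγ).2, ← card_A, ← card_B]
  exact sum_card_filter_inv_mul_mem (by simp [A]) (by simp [B])

/-- with `W = F_{q^m}`, `T = F_{q^a}`, `a ∣ ℓ`, `m ∣ ℓ`, `m < ℓ`,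
`gcd(a,m) = 1`, the sum over all nonzero `γ` of `dim(γT ∩ W)` equals
`(q^a − 1)(q^m − 1)/(q − 1)`. -/
theorem stmt4 {K F : Type*} [Field K] [Field F] [Algebra K F] [Fintype K] [Fintype F]
    [DecidableEq F]
    (q ℓ a m : ℕ) (hq : Fintype.card K = q) (hℓ : finrank K F = ℓ)
    (ha : a ∣ ℓ) (hm : m ∣ ℓ) (hmℓ : m < ℓ) (ham : Nat.gcd a m = 1)
    (T W : IntermediateField K F) (hT : finrank K T = a) (hW : finrank K W = m) :
    ∑ γ ∈ Finset.univ.filter (fun γ : F => γ ≠ 0),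
      finrank K
        ↥((Subalgebra.toSubmodule T.toSubalgebra).map (LinearMap.mulLeft K γ) ⊓
          Subalgebra.toSubmodule W.toSubalgebra)
      = (q ^ a - 1) * (q ^ m - 1) / (q - 1) :=
  stmt4_general q a m hq ham T W hT hW
end

section
/- Let q be a prime power, a ∣ ℓ, and let W' be an (m−1)-dimensional F_q-subspace of F_{q^ℓ}. Define B = {α₁u + α₂v : u, v ∈ W', u ≠ v, α₁, α₂ ∈ F_{q^a}}. Then |B| ≤ C(q^{m-1}, 2)·((q^a − 1)/(q − 1))^2 + 1. -/
/-!
Every nonzero `α ∈ A` is a nonzero scalar multiple of the chosen representative of its point of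
`ℙ K A`, and the scalar can be moved onto the vector: `α * w = rep * (c • w)` with `c • w ∈ W`.
So every nonzero `α₁ u + α₂ v` is `r₁ u' + r₂ v'` with representatives `r₁, r₂` and `u' ≠ v'`
in `W` (if `u' = v'`, merge the two terms; a single term is `r w = r w + r 0`). Such a sum is determined by the
unordered pair `{u', v'}` and the two points of `ℙ K A`, which gives the bound, `0` accounting
for the `+ 1`.
-/

open Module
open scoped LinearAlgebra.Projectivization

theorem Sym2.out_mk_eq_or {α : Type*} (a b : α) :
    s(a, b).out = (a, b) ∨ s(a, b).out = (b, a) :=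
  Sym2.mk_eq_mk_iff.mp (Quot.out_eq _)

open Projectivization

section PairCombinations

variable (K : Type*) {F : Type*} [Field K] [Ring F] [Algebra K F] (A W : Submodule K F)

/-- `Sym2.out` picks an order on the pair; both orders are reached by swapping `p₁` and `p₂`. -/
noncomputable def repPairCombination (x : {z : Sym2 W // ¬z.IsDiag} × ℙ K A × ℙ K A) : F :=
  (x.2.1.rep : F) * x.1.1.out.1 + (x.2.2.rep : F) * x.1.1.out.2

variable {K A W}

theorem rep_mul_add_rep_mul_mem_range {u v : F} (hu : u ∈ W) (hv : v ∈ W) (huv : u ≠ v)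
    (p₁ p₂ : ℙ K A) :
    (p₁.rep : F) * u + (p₂.rep : F) * v ∈ Set.range (repPairCombination K A W) := by
  have hdiag : ¬s((⟨u, hu⟩ : W), ⟨v, hv⟩).IsDiag := by simpa using huv
  rcases Sym2.out_mk_eq_or (⟨u, hu⟩ : W) ⟨v, hv⟩ with h | h
  · exact ⟨(⟨_, hdiag⟩, p₁, p₂), by simp [repPairCombination, h]⟩
  · exact ⟨(⟨_, hdiag⟩, p₂, p₁), by simp [repPairCombination, h, add_comm]⟩

theorem exists_rep_mul_eq_mul {α w : F} (hα : α ∈ A) (hα0 : α ≠ 0) (hw : w ∈ W) :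
    ∃ p : ℙ K A, ∃ w' ∈ W, α * w = (p.rep : F) * w' := by
  have hα0' : (⟨α, hα⟩ : A) ≠ 0 := by simpa using hα0
  obtain ⟨c, hc⟩ := exists_smul_eq_mk_rep K _ hα0'
  refine ⟨mk K _ hα0', ((c⁻¹ : Kˣ) : K) • w, W.smul_mem _ hw, ?_⟩
  rw [← hc, mul_smul_comm, Submodule.coe_smul_of_tower, Units.smul_def, smul_mul_assoc,
    smul_smul, Units.inv_mul, one_smul]

theorem mul_mem_insert_zero_range_repPairCombination {α w : F} (hα : α ∈ A) (hw : w ∈ W) :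
    α * w ∈ insert 0 (Set.range (repPairCombination K A W)) := by
  by_cases hαw : α * w = 0
  · exact .inl hαw
  obtain ⟨p, w', hw', heq⟩ := exists_rep_mul_eq_mul hα (left_ne_zero_of_mul hαw) hw
  have hw'0 : w' ≠ 0 := by rintro rfl; simp_all
  right
  simpa [heq] using rep_mul_add_rep_mul_mem_range hw' W.zero_mem hw'0 p p

theorem mul_add_mul_mem_insert_zero_range_repPairCombination {α₁ α₂ u v : F} (hα₁ : α₁ ∈ A)
    (hα₂ : α₂ ∈ A) (hu : u ∈ W) (hv : v ∈ W) :
    α₁ * u + α₂ * v ∈ insert 0 (Set.range (repPairCombination K A W)) := by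
  rcases eq_or_ne α₁ 0 with rfl | hα₁0
  · simpa using mul_mem_insert_zero_range_repPairCombination hα₂ hv
  rcases eq_or_ne α₂ 0 with rfl | hα₂0
  · simpa using mul_mem_insert_zero_range_repPairCombination hα₁ hu
  obtain ⟨p₁, u', hu', hu_eq⟩ := exists_rep_mul_eq_mul hα₁ hα₁0 hu
  obtain ⟨p₂, v', hv', hv_eq⟩ := exists_rep_mul_eq_mul hα₂ hα₂0 hv
  rw [hu_eq, hv_eq]
  rcases eq_or_ne u' v' with rfl | hne
  · rw [← add_mul]
    exact mul_mem_insert_zero_range_repPairCombination (A.add_mem (p₁.rep).2 (p₂.rep).2) hu'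
  · exact .inr (rep_mul_add_rep_mul_mem_range hu' hv' hne p₁ p₂)

theorem ncard_mul_add_mul_le [Finite A] [Finite W] :
    {x : F | ∃ u ∈ W, ∃ v ∈ W, ∃ α₁ ∈ A, ∃ α₂ ∈ A, x = α₁ * u + α₂ * v}.ncard
      ≤ (Nat.card W).choose 2 * Nat.card (ℙ K A) ^ 2 + 1 := by
  have hsub : {x : F | ∃ u ∈ W, ∃ v ∈ W, ∃ α₁ ∈ A, ∃ α₂ ∈ A, x = α₁ * u + α₂ * v}
      ⊆ insert 0 (Set.range (repPairCombination K A W)) := by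
    rintro _ ⟨u, hu, v, hv, α₁, hα₁, α₂, hα₂, rfl⟩
    exact mul_add_mul_mem_insert_zero_range_repPairCombination hα₁ hα₂ hu hv
  calc _ ≤ (insert 0 (Set.range (repPairCombination K A W))).ncard :=
        Set.ncard_le_ncard hsub ((Set.finite_range _).insert 0)
    _ ≤ Nat.card (Set.range (repPairCombination K A W)) + 1 := Set.ncard_insert_le _ _
    _ ≤ Nat.card ({z : Sym2 W // ¬z.IsDiag} × ℙ K A × ℙ K A) + 1 := by
        gcongr; exact Finite.card_range_le _
    _ = _ := by rw [Nat.card_prod, Nat.card_prod, Sym2.natCard_subtype_not_diag, sq]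

end PairCombinations

theorem stmt7_general {K F : Type*} [Field K] [Field F] [Algebra K F] [Fintype K] [Fintype F]
    (q a m : ℕ) (hq : Fintype.card K = q)
    (A : IntermediateField K F) (hA : finrank K A = a)
    (W' : Submodule K F) (hW' : finrank K W' = m - 1) :
    {x : F | ∃ u ∈ W', ∃ v ∈ W', u ≠ v ∧ ∃ α₁ ∈ A, ∃ α₂ ∈ A, x = α₁ * u + α₂ * v}.ncard
      ≤ Nat.choose (q ^ (m - 1)) 2 * ((q ^ a - 1) / (q - 1)) ^ 2 + 1 := by
  let A' : Submodule K F := Subalgebra.toSubmodule A.toSubalgebra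
  have hK : Nat.card K = q := Nat.card_eq_fintype_card.trans hq
  have hW : Nat.card W' = q ^ (m - 1) := by rw [natCard_eq_pow_finrank (K := K), hK, hW']
  have hA' : Nat.card A' = q ^ a := by rw [natCard_eq_pow_finrank (K := K), hK]; exact congrArg _ hA
  calc _ ≤ {x : F | ∃ u ∈ W', ∃ v ∈ W', ∃ α₁ ∈ A', ∃ α₂ ∈ A', x = α₁ * u + α₂ * v}.ncard := by
        refine Set.ncard_le_ncard ?_ (Set.toFinite _)
        rintro _ ⟨u, hu, v, hv, -, α₁, hα₁, α₂, hα₂, rfl⟩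
        exact ⟨u, hu, v, hv, α₁, hα₁, α₂, hα₂, rfl⟩
    _ ≤ _ := ncard_mul_add_mul_le
    _ = _ := by rw [hW, Projectivization.card'', hA', hK]

/-- for an `(m−1)`-dimensional subspace `W'`, the set
`B = {α₁u + α₂v : u, v ∈ W', u ≠ v, α₁, α₂ ∈ F_{q^a}}` has at most
`C(q^{m-1},2)·((q^a−1)/(q−1))² + 1` elements. -/
theorem stmt7 {K F : Type*} [Field K] [Field F] [Algebra K F] [Fintype K] [Fintype F]
    (q ℓ a m : ℕ) (hq : Fintype.card K = q) (hℓ : finrank K F = ℓ)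
    (ha : a ∣ ℓ) (hm : 1 ≤ m)
    (A : IntermediateField K F) (hA : finrank K A = a)
    (W' : Submodule K F) (hW' : finrank K W' = m - 1) :
    {x : F | ∃ u ∈ W', ∃ v ∈ W', u ≠ v ∧ ∃ α₁ ∈ A, ∃ α₂ ∈ A, x = α₁ * u + α₂ * v}.ncard
      ≤ Nat.choose (q ^ (m - 1)) 2 * ((q ^ a - 1) / (q - 1)) ^ 2 + 1 :=
  stmt7_general q a m hq A hA W' hW'
end

section
/- Let q be a prime power, a ∣ ℓ, and let W, W' be two m-dimensional F_q-subspaces of F_{q^ℓ} such that dim_{F_q}(γF_{q^a} ∩ W) ∈ {0,1} for all γ ∈ F_{q^ℓ}*. Then ∑_{γ ∈ F_{q^ℓ}*} dim_{F_q}(γF_{q^a} ∩ W) ≥ ∑_{γ ∈ F_{q^ℓ}*} dim_{F_q}(γF_{q^a} ∩ W'), and the inequality is strict if there exists γ' with dim_{F_q}(γ'F_{q^a} ∩ W') > 1. -/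
open Module

private lemma aux_pow_le (r d : ℕ) : r * d + 1 ≤ (r + 1) ^ d := by
  induction d with
  | zero => simp
  | succ n ih =>
    rw [pow_succ]
    nlinarith [Nat.one_le_iff_ne_zero.mpr (pow_ne_zero n (by omega : r + 1 ≠ 0))]

private lemma aux_pow_lt (r d : ℕ) (hr : 1 ≤ r) (hd : 2 ≤ d) : r * d + 1 < (r + 1) ^ d := by
  induction d with
  | zero => omega
  | succ n ih =>
    rcases Nat.lt_or_ge n 2 with h | h
    · interval_cases n
      · omega
      · ring_nf; nlinarith
    · have := ih h
      rw [pow_succ]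
      nlinarith [Nat.one_le_iff_ne_zero.mpr (pow_ne_zero n (by omega : r + 1 ≠ 0))]

/-- if `W` satisfies `dim(γF_{q^a} ∩ W) ∈ {0,1}` for all nonzero `γ` and `W'`
is any other `m`-dimensional subspace, then the total intersection-dimension sum for `W` is
at least that for `W'`, strictly if some `dim(γ'F_{q^a} ∩ W') > 1`. -/
theorem stmt13 {K F : Type*} [Field K] [Field F] [Algebra K F] [Fintype K] [Fintype F]
    [DecidableEq F]
    (q ℓ a m : ℕ) (hq : Fintype.card K = q) (hℓ : finrank K F = ℓ) (ha : a ∣ ℓ)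
    (A : IntermediateField K F) (hA : finrank K A = a)
    (W W' : Submodule K F) (hW : finrank K W = m) (hW' : finrank K W' = m)
    (h01 : ∀ γ : F, γ ≠ 0 →
      finrank K ↥((Subalgebra.toSubmodule A.toSubalgebra).map (LinearMap.mulLeft K γ) ⊓ W)
        ≤ 1) :
    (∑ γ ∈ Finset.univ.filter (fun γ : F => γ ≠ 0),
        finrank K ↥((Subalgebra.toSubmodule A.toSubalgebra).map (LinearMap.mulLeft K γ) ⊓ W')
      ≤ ∑ γ ∈ Finset.univ.filter (fun γ : F => γ ≠ 0),
        finrank K ↥((Subalgebra.toSubmodule A.toSubalgebra).map (LinearMap.mulLeft K γ) ⊓ W)) ∧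
    ((∃ γ' : F, γ' ≠ 0 ∧
        1 < finrank K
          ↥((Subalgebra.toSubmodule A.toSubalgebra).map (LinearMap.mulLeft K γ') ⊓ W')) →
      ∑ γ ∈ Finset.univ.filter (fun γ : F => γ ≠ 0),
        finrank K ↥((Subalgebra.toSubmodule A.toSubalgebra).map (LinearMap.mulLeft K γ) ⊓ W')
      < ∑ γ ∈ Finset.univ.filter (fun γ : F => γ ≠ 0),
        finrank K ↥((Subalgebra.toSubmodule A.toSubalgebra).map (LinearMap.mulLeft K γ) ⊓ W)) := by
  classical
  clear hq hℓ ha hA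
  set G : Finset F := Finset.univ.filter (fun γ : F => γ ≠ 0) with hG
  set Q : F → Submodule K F :=
    fun γ => (Subalgebra.toSubmodule A.toSubalgebra).map (LinearMap.mulLeft K γ) with hQ
  set n : Submodule K F → ℕ :=
    fun P => (Finset.univ.filter (fun w : F => w ∈ P ∧ w ≠ 0)).card with hn
  set c : ℕ := (Finset.univ.filter (fun u : F => u ∈ A ∧ u ≠ 0)).card with hc
  -- cardinality of a submodule
  have card_sub : ∀ P : Submodule K F, n P + 1 = Fintype.card K ^ finrank K ↥P := by
    intro P
    have h1 : Nat.card ↥P = Fintype.card K ^ finrank K ↥P := by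
      rw [Nat.card_eq_fintype_card]
      exact card_eq_pow_finrank
    have h2 : Nat.card ↥P = n P + 1 := by
      rw [Nat.card_eq_fintype_card, Fintype.card_subtype, hn]
      have h : (Finset.univ.filter (fun w : F => w ∈ P))
          = insert (0 : F) (Finset.univ.filter (fun w : F => w ∈ P ∧ w ≠ 0)) := by
        ext w
        simp only [Finset.mem_filter, Finset.mem_univ, true_and, Finset.mem_insert]
        by_cases hw : w = 0
        · simp [hw]
        · simp [hw]
      rw [h, Finset.card_insert_of_notMem (by simp)]
    rw [← h2, h1]
  -- membership in γA
  have hmem : ∀ γ : F, γ ≠ 0 → ∀ w : F, (w ∈ Q γ ↔ γ⁻¹ * w ∈ A) := by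
    intro γ hγ w
    simp only [hQ, Submodule.mem_map, Subalgebra.mem_toSubmodule,
      IntermediateField.mem_toSubalgebra, LinearMap.mulLeft_apply]
    constructor
    · rintro ⟨x, hx, rfl⟩
      rwa [← mul_assoc, inv_mul_cancel₀ hγ, one_mul]
    · intro hx
      exact ⟨γ⁻¹ * w, hx, by rw [← mul_assoc, mul_inv_cancel₀ hγ, one_mul]⟩
  -- for fixed nonzero w, the number of γ with w ∈ γA is c
  have hcount : ∀ w : F, w ≠ 0 →
      (G.filter (fun γ : F => w ∈ Q γ)).card = c := by
    intro w hw
    rw [hc]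
    apply Finset.card_bij' (fun γ _ => γ⁻¹ * w) (fun u _ => w * u⁻¹)
    · intro γ hγ
      simp only [hG, Finset.mem_filter, Finset.mem_univ, true_and] at hγ ⊢
      exact ⟨(hmem γ hγ.1 w).mp hγ.2, mul_ne_zero (inv_ne_zero hγ.1) hw⟩
    · intro u hu
      simp only [Finset.mem_filter, Finset.mem_univ, true_and] at hu
      have hwu : w * u⁻¹ ≠ 0 := mul_ne_zero hw (inv_ne_zero hu.2)
      simp only [hG, Finset.mem_filter, Finset.mem_univ, true_and]
      refine ⟨hwu, (hmem _ hwu w).mpr ?_⟩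
      have h : (w * u⁻¹)⁻¹ * w = u := by field_simp
      rw [h]
      exact hu.1
    · intro γ hγ
      simp only [hG, Finset.mem_filter, Finset.mem_univ, true_and] at hγ
      field_simp
    · intro u hu
      simp only [Finset.mem_filter, Finset.mem_univ, true_and] at hu
      field_simp
  -- double counting
  have hdouble : ∀ V : Submodule K F, ∑ γ ∈ G, n (Q γ ⊓ V) = n V * c := by
    intro V
    have step : ∀ γ ∈ G, n (Q γ ⊓ V)
        = ∑ w ∈ Finset.univ.filter (fun w : F => w ∈ V ∧ w ≠ 0),
            (if w ∈ Q γ then 1 else 0) := by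
      intro γ _
      have hfe : (Finset.univ.filter (fun w : F => w ∈ Q γ ⊓ V ∧ w ≠ 0))
          = Finset.univ.filter (fun w : F => (w ∈ V ∧ w ≠ 0) ∧ w ∈ Q γ) := by
        ext w
        simp only [Finset.mem_filter, Finset.mem_univ, true_and, Submodule.mem_inf]
        tauto
      rw [← Finset.card_filter, hn]
      beta_reduce
      rw [hfe, ← Finset.filter_filter]
    rw [Finset.sum_congr rfl step, Finset.sum_comm]
    have inner : ∀ w ∈ Finset.univ.filter (fun w : F => w ∈ V ∧ w ≠ 0),
        (∑ γ ∈ G, if w ∈ Q γ then (1 : ℕ) else 0) = c := by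
      intro w hw
      simp only [Finset.mem_filter, Finset.mem_univ, true_and] at hw
      rw [← Finset.card_filter]
      exact hcount w hw.2
    rw [Finset.sum_congr rfl inner, Finset.sum_const, smul_eq_mul, hn]
  -- sums of cardinalities agree
  have hpow : ∀ V : Submodule K F,
      ∑ γ ∈ G, Fintype.card K ^ finrank K ↥(Q γ ⊓ V) = n V * c + G.card := by
    intro V
    have h : ∀ γ ∈ G, Fintype.card K ^ finrank K ↥(Q γ ⊓ V) = n (Q γ ⊓ V) + 1 :=
      fun γ _ => (card_sub (Q γ ⊓ V)).symm
    rw [Finset.sum_congr rfl h, Finset.sum_add_distrib, Finset.sum_const, smul_eq_mul,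
      mul_one, hdouble]
  have hnWW' : n W = n W' := by
    have h1 := card_sub W
    have h2 := card_sub W'
    rw [hW] at h1; rw [hW'] at h2
    omega
  have hkey : ∑ γ ∈ G, Fintype.card K ^ finrank K ↥(Q γ ⊓ W')
      = ∑ γ ∈ G, Fintype.card K ^ finrank K ↥(Q γ ⊓ W) := by
    rw [hpow, hpow, hnWW']
  obtain ⟨r, hr⟩ : ∃ r : ℕ, Fintype.card K = r + 1 :=
    ⟨Fintype.card K - 1, by have := Fintype.card_pos (α := K); omega⟩
  have hr1 : 1 ≤ r := by have := Fintype.one_lt_card (α := K); omega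
  have hWexact : ∑ γ ∈ G, Fintype.card K ^ finrank K ↥(Q γ ⊓ W)
      = ∑ γ ∈ G, (r * finrank K ↥(Q γ ⊓ W) + 1) := by
    apply Finset.sum_congr rfl
    intro γ hγ
    simp only [hG, Finset.mem_filter, Finset.mem_univ, true_and] at hγ
    have hle : finrank K ↥(Q γ ⊓ W) ≤ 1 := h01 γ hγ
    interval_cases h : finrank K ↥(Q γ ⊓ W) <;> simp [hr]
  have hsplit : ∀ V : Submodule K F, ∑ γ ∈ G, (r * finrank K ↥(Q γ ⊓ V) + 1)
      = r * (∑ γ ∈ G, finrank K ↥(Q γ ⊓ V)) + G.card := by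
    intro V
    rw [Finset.sum_add_distrib, Finset.sum_const, smul_eq_mul, mul_one, Finset.mul_sum]
  constructor
  · have h : r * (∑ γ ∈ G, finrank K ↥(Q γ ⊓ W')) + G.card
        ≤ r * (∑ γ ∈ G, finrank K ↥(Q γ ⊓ W)) + G.card := by
      rw [← hsplit, ← hsplit]
      calc ∑ γ ∈ G, (r * finrank K ↥(Q γ ⊓ W') + 1)
          ≤ ∑ γ ∈ G, Fintype.card K ^ finrank K ↥(Q γ ⊓ W') := by
            apply Finset.sum_le_sum
            intro γ _
            rw [hr]
            exact aux_pow_le r _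
        _ = ∑ γ ∈ G, Fintype.card K ^ finrank K ↥(Q γ ⊓ W) := hkey
        _ = _ := hWexact
    have hmul : r * (∑ γ ∈ G, finrank K ↥(Q γ ⊓ W'))
        ≤ r * (∑ γ ∈ G, finrank K ↥(Q γ ⊓ W)) := by omega
    exact Nat.le_of_mul_le_mul_left hmul (by omega)
  · rintro ⟨γ', hγ', hd⟩
    have hd' : 1 < finrank K ↥(Q γ' ⊓ W') := hd
    have hW'lt : ∑ γ ∈ G, (r * finrank K ↥(Q γ ⊓ W') + 1)
        < ∑ γ ∈ G, Fintype.card K ^ finrank K ↥(Q γ ⊓ W') := by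
      apply Finset.sum_lt_sum
      · intro γ _; rw [hr]; exact aux_pow_le r _
      · refine ⟨γ', by simp [hG, hγ'], ?_⟩
        rw [hr]
        exact aux_pow_lt r _ hr1 (by omega)
    have h : r * (∑ γ ∈ G, finrank K ↥(Q γ ⊓ W')) + G.card
        < r * (∑ γ ∈ G, finrank K ↥(Q γ ⊓ W)) + G.card := by
      rw [← hsplit, ← hsplit]
      calc ∑ γ ∈ G, (r * finrank K ↥(Q γ ⊓ W') + 1)
          < ∑ γ ∈ G, Fintype.card K ^ finrank K ↥(Q γ ⊓ W') := hW'lt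
        _ = ∑ γ ∈ G, Fintype.card K ^ finrank K ↥(Q γ ⊓ W) := hkey
        _ = _ := hWexact
    have hmul : r * (∑ γ ∈ G, finrank K ↥(Q γ ⊓ W'))
        < r * (∑ γ ∈ G, finrank K ↥(Q γ ⊓ W)) := by omega
    exact Nat.lt_of_mul_lt_mul_left hmul
end

section
/- Let q be a prime power, ℓ ≥ 1, s < ℓ, and n ≥ 2. Consider nonnegative integers b_α ∈ {0,1,...,ℓ−s} indexed by α in a set of size n−1, subject to ∑_α q^{−b_α} ≤ T for a fixed real T with (n−1)q^{−(ℓ−s)} ≤ T ≤ n−1. Let b = log_q((n−1)/T). If b ∉ ℤ, then any feasible assignment satisfies ∑_α b_α ≥ t⌊b⌋ + (n−1−t)⌈b⌉ where t = ⌊(T − (n−1)q^{−⌈b⌉})/(q^{−⌊b⌋} − q^{−⌈b⌉})⌋. -/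
/-- Bernoulli-type bound for integer exponents: for `1 < q` and any `y : ℤ`,
`1 + y * (q⁻¹ - 1) ≤ q ^ (-y)`. -/
lemma stmt17_bernoulli {q : ℝ} (hq : 1 < q) (y : ℤ) :
    1 + (y : ℝ) * (q⁻¹ - 1) ≤ q ^ (-y) := by
  have hq0 : (0 : ℝ) < q := lt_trans one_pos hq
  have hinv0 : (0 : ℝ) < q⁻¹ := inv_pos.mpr hq0
  obtain ⟨m, rfl | rfl⟩ := y.eq_nat_or_neg
  · -- y = m ≥ 0
    have h' : 1 + (m : ℝ) * (q⁻¹ - 1) ≤ q⁻¹ ^ m := by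
      simpa using one_add_mul_le_pow (a := q⁻¹ - 1) (by nlinarith) m
    have heq : (q : ℝ) ^ (-((m : ℕ) : ℤ)) = q⁻¹ ^ m := by
      rw [zpow_neg, zpow_natCast, inv_pow]
    rw [heq]
    push_cast
    exact h'
  · -- y = -m
    have h' : 1 + (m : ℝ) * (q - 1) ≤ q ^ m := by
      simpa using one_add_mul_le_pow (a := q - 1) (by linarith) m
    have hinv : 1 - q⁻¹ ≤ q - 1 := by
      have h1 : q⁻¹ * q = 1 := inv_mul_cancel₀ (ne_of_gt hq0)
      nlinarith
    have heq : (q : ℝ) ^ (-(-((m : ℕ) : ℤ))) = q ^ m := by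
      rw [neg_neg, zpow_natCast]
    rw [heq]
    push_cast
    have hm : (0 : ℝ) ≤ m := Nat.cast_nonneg m
    nlinarith
/-- Chord bound: the convex function `x ↦ q^{-x}` lies above the line through
`(f, q^{-f})` and `(f+1, q^{-(f+1)})` at every integer `x`. -/
lemma stmt17_chord {q : ℝ} (hq : 1 < q) (f x : ℤ) :
    (q : ℝ) ^ (-f) + ((x : ℝ) - (f : ℝ)) * (q ^ (-(f + 1)) - q ^ (-f)) ≤ q ^ (-x) := by
  have hq0 : (0 : ℝ) < q := lt_trans one_pos hq
  have hfpos : (0 : ℝ) < q ^ (-f) := zpow_pos hq0 _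
  have key := stmt17_bernoulli hq (x - f)
  have h1 : q ^ (-(f + 1)) - q ^ (-f) = q ^ (-f) * (q⁻¹ - 1) := by
    rw [mul_sub, mul_one, ← zpow_neg_one, ← zpow_add₀ (ne_of_gt hq0)]
    ring_nf
  have h2 : q ^ (-f) * q ^ (-(x - f)) = q ^ (-x) := by
    rw [← zpow_add₀ (ne_of_gt hq0)]; ring_nf
  have hcast : ((x - f : ℤ) : ℝ) = (x : ℝ) - (f : ℝ) := by push_cast; ring
  calc (q : ℝ) ^ (-f) + ((x : ℝ) - (f : ℝ)) * (q ^ (-(f + 1)) - q ^ (-f))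
      = q ^ (-f) * (1 + ((x - f : ℤ) : ℝ) * (q⁻¹ - 1)) := by rw [h1, hcast]; ring
    _ ≤ q ^ (-f) * q ^ (-(x - f)) := mul_le_mul_of_nonneg_left key (le_of_lt hfpos)
    _ = q ^ (-x) := h2

/-- the balancing bound: if the integers `b_α ∈ {0,…,ℓ−s}` satisfy
`∑ q^{−b_α} ≤ T` and `b = log_q((n−1)/T) ∉ ℤ`, then
`∑ b_α ≥ t⌊b⌋ + (n−1−t)⌈b⌉` with `t = ⌊(T−(n−1)q^{−⌈b⌉})/(q^{−⌊b⌋}−q^{−⌈b⌉})⌋`. -/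
theorem stmt17 (q ℓ s n : ℕ) (hq : IsPrimePow q) (hℓ : 1 ≤ ℓ) (hs : s < ℓ) (hn : 2 ≤ n)
    (T : ℝ) (hT1 : ((n : ℝ) - 1) * (q : ℝ) ^ (-((ℓ : ℤ) - s)) ≤ T) (hT2 : T ≤ (n : ℝ) - 1)
    (bv : Fin (n - 1) → ℕ) (hbv : ∀ α, bv α ≤ ℓ - s)
    (hfeas : ∑ α, (q : ℝ) ^ (-(bv α : ℤ)) ≤ T) :
    let b : ℝ := Real.logb q (((n : ℝ) - 1) / T)
    let t : ℤ := ⌊(T - ((n : ℝ) - 1) * (q : ℝ) ^ (-⌈b⌉ : ℤ)) /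
      ((q : ℝ) ^ (-⌊b⌋ : ℤ) - (q : ℝ) ^ (-⌈b⌉ : ℤ))⌋
    (¬∃ z : ℤ, b = z) →
      (∑ α, (bv α : ℝ)) ≥ (t : ℝ) * (⌊b⌋ : ℝ) + ((n : ℝ) - 1 - (t : ℝ)) * (⌈b⌉ : ℝ) := by
  intro b t hb
  have hq2 : 2 ≤ q := hq.two_le
  have hq1 : (1 : ℝ) < (q : ℝ) := by
    have : (1 : ℕ) < q := by omega
    exact_mod_cast this
  have hq0 : (0 : ℝ) < (q : ℝ) := lt_trans one_pos hq1
  set f : ℤ := ⌊b⌋ with hfdef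
  -- ceil = floor + 1
  have hceil : ⌈b⌉ = f + 1 := by
    have h1 : ⌈b⌉ ≤ f + 1 := Int.ceil_le_floor_add_one b
    have h2 : f ≤ ⌈b⌉ := Int.floor_le_ceil b
    rcases eq_or_lt_of_le h2 with heq | hlt
    · exfalso
      apply hb
      refine ⟨f, le_antisymm ?_ (Int.floor_le b)⟩
      calc b ≤ (⌈b⌉ : ℝ) := Int.le_ceil b
        _ = (f : ℝ) := by rw [← heq]
    · omega
  set D : ℝ := (q : ℝ) ^ (-f) - (q : ℝ) ^ (-(f + 1)) with hDdef
  have hD : 0 < D := by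
    have : (q : ℝ) ^ (-(f + 1)) < (q : ℝ) ^ (-f) :=
      zpow_lt_zpow_right₀ hq1 (by omega)
    rw [hDdef]; linarith
  -- cardinality
  have hcard : ((n - 1 : ℕ) : ℝ) = (n : ℝ) - 1 := by
    have h1 : (1 : ℕ) ≤ n := by omega
    push_cast [Nat.cast_sub h1]
    ring
  -- chord bound summed
  have hsum : ((n : ℝ) - 1) * (q : ℝ) ^ (-f)
      + ((∑ α, (bv α : ℝ)) - ((n : ℝ) - 1) * (f : ℝ)) * ((q : ℝ) ^ (-(f + 1)) - (q : ℝ) ^ (-f))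
      ≤ T := by
    have step : ∀ α : Fin (n - 1),
        (q : ℝ) ^ (-f) + ((bv α : ℝ) - (f : ℝ)) * ((q : ℝ) ^ (-(f + 1)) - (q : ℝ) ^ (-f))
          ≤ (q : ℝ) ^ (-(bv α : ℤ)) := by
      intro α
      have := stmt17_chord hq1 f (bv α)
      simpa using this
    have hsum2 : ∑ α, ((q : ℝ) ^ (-f) + ((bv α : ℝ) - (f : ℝ))
        * ((q : ℝ) ^ (-(f + 1)) - (q : ℝ) ^ (-f)))
        ≤ ∑ α, (q : ℝ) ^ (-(bv α : ℤ)) := Finset.sum_le_sum fun α _ => step α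
    have hexp : ∑ α, ((q : ℝ) ^ (-f) + ((bv α : ℝ) - (f : ℝ))
        * ((q : ℝ) ^ (-(f + 1)) - (q : ℝ) ^ (-f)))
        = ((n : ℝ) - 1) * (q : ℝ) ^ (-f)
          + ((∑ α, (bv α : ℝ)) - ((n : ℝ) - 1) * (f : ℝ))
            * ((q : ℝ) ^ (-(f + 1)) - (q : ℝ) ^ (-f)) := by
      rw [Finset.sum_add_distrib, Finset.sum_const, Finset.card_univ, Fintype.card_fin,
        ← Finset.sum_mul, Finset.sum_sub_distrib, Finset.sum_const, Finset.card_univ,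
        Fintype.card_fin, nsmul_eq_mul, nsmul_eq_mul, hcard]
    rw [hexp] at hsum2
    linarith
  -- the quantity X and the integer sum
  set X : ℝ := (((n : ℝ) - 1) * (q : ℝ) ^ (-f) - T) / D with hXdef
  set Sz : ℤ := ∑ α, (bv α : ℤ) with hSz
  have hSzcast : ((Sz : ℤ) : ℝ) = ∑ α, (bv α : ℝ) := by rw [hSz]; push_cast; ring_nf
  set m : ℤ := (n : ℤ) - 1 with hm
  have hmcast : ((m : ℤ) : ℝ) = (n : ℝ) - 1 := by rw [hm]; push_cast; ring
  have hkey : X ≤ ((Sz - m * f : ℤ) : ℝ) := by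
    rw [hXdef, div_le_iff₀ hD, hDdef]
    push_cast
    rw [hSzcast, hmcast]
    nlinarith [hsum]
  have hceilX : ⌈X⌉ ≤ Sz - m * f := Int.ceil_le.mpr hkey
  -- identify t
  have ht : t = m - ⌈X⌉ := by
    have hnum : T - ((n : ℝ) - 1) * (q : ℝ) ^ (-(f + 1))
        = (m : ℝ) * D - ((((n : ℝ) - 1) * (q : ℝ) ^ (-f)) - T) := by
      rw [hmcast, hDdef]; ring
    have harg : (T - ((n : ℝ) - 1) * (q : ℝ) ^ (-⌈b⌉ : ℤ)) /
        ((q : ℝ) ^ (-⌊b⌋ : ℤ) - (q : ℝ) ^ (-⌈b⌉ : ℤ)) = (m : ℝ) + (-X) := by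
      rw [hceil]
      show (T - ((n : ℝ) - 1) * (q : ℝ) ^ (-(f + 1))) / D = (m : ℝ) + (-X)
      rw [hnum, hXdef]
      field_simp
      ring
    show (⌊(T - ((n : ℝ) - 1) * (q : ℝ) ^ (-⌈b⌉ : ℤ)) /
        ((q : ℝ) ^ (-⌊b⌋ : ℤ) - (q : ℝ) ^ (-⌈b⌉ : ℤ))⌋ : ℤ) = m - ⌈X⌉
    rw [harg, Int.floor_intCast_add, Int.floor_neg]
    ring
  -- conclude
  rw [ht, hceil]
  have hfinal : (m : ℤ) * f + ⌈X⌉ ≤ Sz := by linarith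
  have hfinalR : ((m : ℤ) : ℝ) * ((f : ℤ) : ℝ) + ((⌈X⌉ : ℤ) : ℝ) ≤ ((Sz : ℤ) : ℝ) := by
    exact_mod_cast hfinal
  rw [hSzcast, hmcast] at hfinalR
  push_cast
  nlinarith [hfinalR]
end

section
/- Let q be a prime power, A ⊆ F_{q^ℓ} with |A| = n, α* ∈ A, and let g_{s+1},...,g_ℓ ∈ F_{q^ℓ}[x] be polynomials of degree < r = n − k such that {g_i(α*)}_{i=s+1}^{ℓ} is F_q-linearly independent. For each α ∈ A \ {α*} let b_α = rank_{F_q}{g_i(α)}_{i=s+1}^ℓ, and let S_α = {e ∈ F_q^{ℓ−s} : ∑_i e_i g_i(α) = 0}, so dim S_α = ℓ − s − b_α. Then ∑_{α ∈ A\{α*}} q^{−b_α} ≤ ((r−1)(q^{ℓ−s} − 1) + n − 1)/q^{ℓ−s}. -/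
/-!
Put `S_α = {e ∈ K^m | ∑ eᵢ gᵢ(α) = 0}` with `m = ℓ - s`. By rank–nullity `|S_α| = q^{m - b_α}`, so the
sum to bound is `∑_α |S_α| / q^m`, and double counting turns `∑_α |S_α|` into `∑_e #{α | e ∈ S_α}`.
The term `e = 0` contributes `n - 1`. For `e ≠ 0` the polynomial `∑ eᵢ gᵢ` does not vanish at `α*`,
by the independence of the `gᵢ(α*)`, and has degree `< r`, so it has at most `r - 1` roots.
-/

open Module Finset Polynomial Submodule

section LinearAlgebra

variable {K V ι : Type*} [Field K] [Fintype K] [AddCommGroup V] [Module K V] [DecidableEq V]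
  [Fintype ι] [DecidableEq ι]

theorem card_filter_linearCombination_eq_zero_mul_pow_finrank_span (v : ι → V) :
    #{e | Fintype.linearCombination K v e = 0} * Fintype.card K ^ finrank K (span K (Set.range v))
      = Fintype.card K ^ Fintype.card ι := by
  let L := Fintype.linearCombination K v
  have hker : #{e | L e = 0} = Fintype.card K ^ finrank K (LinearMap.ker L) := by
    rw [← Nat.card_eq_fintype_card, ← natCard_eq_pow_finrank, ← Nat.card_eq_finsetCard]
    exact Nat.card_congr (Equiv.subtypeEquivRight fun e => by simp [L])
  rw [hker, ← pow_add, ← Fintype.range_linearCombination, add_comm,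
    LinearMap.finrank_range_add_finrank_ker, finrank_fintype_fun_eq_card]

theorem zpow_neg_finrank_span_eq (v : ι → V) :
    (Fintype.card K : ℝ) ^ (-(finrank K (span K (Set.range v)) : ℤ))
      = #{e | Fintype.linearCombination K v e = 0} / (Fintype.card K : ℝ) ^ Fintype.card ι := by
  have hq : (0 : ℝ) < Fintype.card K := by exact_mod_cast Fintype.card_pos
  rw [eq_div_iff (by positivity), zpow_neg, zpow_natCast, inv_mul_eq_div, div_eq_iff (by positivity)]
  exact_mod_cast (card_filter_linearCombination_eq_zero_mul_pow_finrank_span v).symm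

theorem sum_zpow_neg_finrank_span_le {α : Type*} (B : Finset α) (v : α → ι → V) (c : ℝ)
    (hc : ∀ e ≠ 0, (#{a ∈ B | Fintype.linearCombination K (v a) e = 0} : ℝ) ≤ c) :
    ∑ a ∈ B, (Fintype.card K : ℝ) ^ (-(finrank K (span K (Set.range (v a))) : ℤ))
      ≤ (c * ((Fintype.card K : ℝ) ^ Fintype.card ι - 1) + #B) /
          (Fintype.card K : ℝ) ^ Fintype.card ι := by
  classical
  simp only [zpow_neg_finrank_span_eq, ← sum_div]
  gcongr
  have hswap := sum_card_bipartiteAbove_eq_sum_card_bipartiteBelow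
    (fun a e => Fintype.linearCombination K (v a) e = 0) (s := B) (t := univ)
  simp only [bipartiteAbove, bipartiteBelow] at hswap
  rw [← Nat.cast_sum, hswap, ← add_sum_erase _ _ (mem_univ 0)]
  push_cast
  have hnonzero : ∑ e ∈ univ.erase 0, (#{a ∈ B | Fintype.linearCombination K (v a) e = 0} : ℝ)
      ≤ #((univ : Finset (ι → K)).erase 0) * c :=
    sum_le_card_nsmul _ _ _ (fun e he => hc e (ne_of_mem_erase he)) |>.trans_eq (nsmul_eq_mul _ _)
  rw [card_erase_of_mem (mem_univ _), card_univ, Fintype.card_fun] at hnonzero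
  have hzero : (#{a ∈ B | Fintype.linearCombination K (v a) 0 = 0} : ℝ) ≤ #B := by
    exact_mod_cast card_filter_le _ _
  push_cast [Nat.cast_sub Fintype.card_pos, Nat.one_le_pow _ _ Fintype.card_pos] at hnonzero
  linarith

end LinearAlgebra

namespace Polynomial

theorem card_filter_eval_eq_zero_lt {R : Type*} [CommRing R] [IsDomain R] [DecidableEq R]
    {p : R[X]} (hp : p ≠ 0) {r : ℕ} (hdeg : p.degree < r) (B : Finset R) :
    #{a ∈ B | p.eval a = 0} < r := by
  refine (card_le_degree_of_subset_roots fun a ha => ?_).trans_lt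
    ((natDegree_lt_iff_degree_lt hp).mpr hdeg)
  rw [mem_roots hp]
  exact (mem_filter.mp ha).2

variable {K F ι : Type*} [Field K] [Field F] [Algebra K F] [Fintype ι]

theorem eval_fintypeLinearCombination (g : ι → F[X]) (e : ι → K) (a : F) :
    (Fintype.linearCombination K g e).eval a
      = Fintype.linearCombination K (fun i => (g i).eval a) e := by
  simp [Fintype.linearCombination_apply, eval_finsetSum]

theorem degree_fintypeLinearCombination_lt {g : ι → F[X]} {r : ℕ} (hdeg : ∀ i, (g i).degree < r)
    (e : ι → K) : (Fintype.linearCombination K g e).degree < r := by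
  rw [← mem_degreeLT, Fintype.linearCombination_apply]
  exact sum_mem fun i _ => smul_of_tower_mem _ (e i) (mem_degreeLT.mpr (hdeg i))

end Polynomial

theorem stmt18_general {K F : Type*} [Field K] [Field F] [Algebra K F] [Fintype K]
    [DecidableEq F]
    (q ℓ s n k : ℕ) (hq : Fintype.card K = q)
    (A : Finset F) (hAn : A.card = n) (αs : F) (hαs : αs ∈ A)
    (g : Fin (ℓ - s) → Polynomial F)
    (hdeg : ∀ i, (g i).degree < ((n - k : ℕ) : ℕ))
    (hli : LinearIndependent K (fun i => (g i).eval αs)) :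
    ∑ α ∈ A.erase αs,
      (q : ℝ) ^ (-(finrank K ↥(Submodule.span K (Set.range fun i => (g i).eval α)) : ℤ))
    ≤ ((((n - k : ℕ) : ℝ) - 1) * ((q : ℝ) ^ (ℓ - s) - 1) + (n : ℝ) - 1) /
        (q : ℝ) ^ (ℓ - s) := by
  have hfew_roots : ∀ e ≠ 0, (#{α ∈ A.erase αs |
      Fintype.linearCombination K (fun i => (g i).eval α) e = 0} : ℝ) ≤ ((n - k : ℕ) : ℝ) - 1 := by
    intro e he
    have hne : Fintype.linearCombination K g e ≠ 0 := fun h0 => he <|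
      hli.fintypeLinearCombination_injective <| by
        rw [← eval_fintypeLinearCombination, h0, eval_zero, map_zero]
    have hlt := card_filter_eval_eq_zero_lt hne (degree_fintypeLinearCombination_lt hdeg e)
      (A.erase αs)
    simp_rw [eval_fintypeLinearCombination] at hlt
    rw [le_sub_iff_add_le]
    exact_mod_cast hlt
  have hcard : (#(A.erase αs) : ℝ) = n - 1 := by
    rw [card_erase_of_mem hαs, hAn, Nat.cast_pred (hAn ▸ card_pos.mpr ⟨αs, hαs⟩)]
  have hbound := sum_zpow_neg_finrank_span_le (A.erase αs) (fun α i => (g i).eval α) _ hfew_roots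
  rw [hcard, hq, Fintype.card_fin] at hbound
  simpa only [add_sub_assoc] using hbound

/-- for check polynomials `g_i` of degree `< r = n − k` whose evaluations at
`α*` are `F_q`-linearly independent, with `b_α = rank_{F_q}{g_i(α)}`, one has
`∑_{α ≠ α*} q^{−b_α} ≤ ((r−1)(q^{ℓ−s}−1)+n−1)/q^{ℓ−s}`. -/
theorem stmt18 {K F : Type*} [Field K] [Field F] [Algebra K F] [Fintype K] [Fintype F]
    [DecidableEq F]
    (q ℓ s n k : ℕ) (hq : Fintype.card K = q) (hℓ : finrank K F = ℓ) (hs : s ≤ ℓ)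
    (A : Finset F) (hAn : A.card = n) (αs : F) (hαs : αs ∈ A)
    (g : Fin (ℓ - s) → Polynomial F)
    (hdeg : ∀ i, (g i).degree < ((n - k : ℕ) : ℕ))
    (hli : LinearIndependent K (fun i => (g i).eval αs)) :
    ∑ α ∈ A.erase αs,
      (q : ℝ) ^ (-(finrank K ↥(Submodule.span K (Set.range fun i => (g i).eval α)) : ℤ))
    ≤ ((((n - k : ℕ) : ℝ) - 1) * ((q : ℝ) ^ (ℓ - s) - 1) + (n : ℝ) - 1) /
        (q : ℝ) ^ (ℓ - s) :=
  stmt18_general q ℓ s n k hq A hAn αs hαs g hdeg hli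
end
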